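/- arXiv:1810.01481 — 3 statements merged into one kernel-verified Lean document; each statement's English description precedes it below -/
import Mathlib

section
/- The recognizing functional Tol(·, 𝐀, 𝐛) : ℝⁿ → ℝ, defined as Tol(x) = min_i ( rad 𝐛_i − max over vertex rows a of row i of | mid 𝐛_i − a·x | ), is a concave function of x on all of ℝⁿ. -/
open Matrix

/-- The set of vertex vectors of the `i`-th interval row. -/
def vertRow {m n : ℕ} (Alo Ahi : Matrix (Fin m) (Fin n) ℝ) (i : Fin m) :
    Set (Fin n → ℝ) :=
  {a | ∀ j, a j = Alo i j ∨ a j = Ahi i j}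

/-- The recognizing functional of the tolerable solution set:
`Tol(x) = min_i ( rad 𝐛_i − max over vertex rows a of row i of |mid 𝐛_i − a·x| )`. -/
noncomputable def Tol {m n : ℕ} (Alo Ahi : Matrix (Fin m) (Fin n) ℝ)
    (blo bhi : Fin m → ℝ) (x : Fin n → ℝ) : ℝ :=
  ⨅ i : Fin m,
    ((bhi i - blo i) / 2 -
      sSup ((fun a => |(bhi i + blo i) / 2 - a ⬝ᵥ x|) '' vertRow Alo Ahi i))

lemma vertRow_finite {m n : ℕ} (Alo Ahi : Matrix (Fin m) (Fin n) ℝ) (i : Fin m) :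
    (vertRow Alo Ahi i).Finite := by
  have : vertRow Alo Ahi i = Set.pi Set.univ (fun j => {Alo i j, Ahi i j}) := by
    ext a
    simp [vertRow, Set.mem_pi]
  rw [this]
  exact Set.Finite.pi (fun j => (Set.finite_singleton _).insert _)

lemma vertRow_nonempty {m n : ℕ} (Alo Ahi : Matrix (Fin m) (Fin n) ℝ) (i : Fin m) :
    (vertRow Alo Ahi i).Nonempty :=
  ⟨fun j => Alo i j, fun j => Or.inl rfl⟩

/-- Each single vertex term is convex. -/
lemma term_convex {n : ℕ} (c : ℝ) (a : Fin n → ℝ) :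
    ConvexOn ℝ Set.univ (fun x : Fin n → ℝ => |c - a ⬝ᵥ x|) := by
  refine ⟨convex_univ, ?_⟩
  intro x _ y _ α β hα hβ hαβ
  have hd : a ⬝ᵥ (α • x + β • y) = α * (a ⬝ᵥ x) + β * (a ⬝ᵥ y) := by
    simp [dotProduct_add, dotProduct_smul, smul_eq_mul]
  have hc : c - a ⬝ᵥ (α • x + β • y) = α * (c - a ⬝ᵥ x) + β * (c - a ⬝ᵥ y) := by
    rw [hd]; linear_combination (-c) * hαβ
  calc |c - a ⬝ᵥ (α • x + β • y)| = |α * (c - a ⬝ᵥ x) + β * (c - a ⬝ᵥ y)| := by rw [hc]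
    _ ≤ |α * (c - a ⬝ᵥ x)| + |β * (c - a ⬝ᵥ y)| := abs_add_le _ _
    _ = α * |c - a ⬝ᵥ x| + β * |c - a ⬝ᵥ y| := by
        rw [abs_mul, abs_mul, abs_of_nonneg hα, abs_of_nonneg hβ]
    _ = α • |c - a ⬝ᵥ x| + β • |c - a ⬝ᵥ y| := by simp [smul_eq_mul]

lemma sup_convex {m n : ℕ} (Alo Ahi : Matrix (Fin m) (Fin n) ℝ) (i : Fin m) (c : ℝ) :
    ConvexOn ℝ Set.univ
      (fun x : Fin n → ℝ => sSup ((fun a => |c - a ⬝ᵥ x|) '' vertRow Alo Ahi i)) := by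
  refine ⟨convex_univ, ?_⟩
  intro x _ y _ α β hα hβ hαβ
  set z := α • x + β • y with hz
  have hfinz : ((fun a => |c - a ⬝ᵥ z|) '' vertRow Alo Ahi i).Finite :=
    (vertRow_finite Alo Ahi i).image _
  have hnez : ((fun a => |c - a ⬝ᵥ z|) '' vertRow Alo Ahi i).Nonempty :=
    (vertRow_nonempty Alo Ahi i).image _
  obtain ⟨v, hvmem, hveq⟩ :
      ∃ v ∈ vertRow Alo Ahi i,
        |c - v ⬝ᵥ z| = sSup ((fun a => |c - a ⬝ᵥ z|) '' vertRow Alo Ahi i) := by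
    have hmem := hnez.csSup_mem hfinz
    obtain ⟨v, hv, hveq⟩ := hmem
    exact ⟨v, hv, hveq⟩
  have hbx : BddAbove ((fun a => |c - a ⬝ᵥ x|) '' vertRow Alo Ahi i) :=
    ((vertRow_finite Alo Ahi i).image _).bddAbove
  have hby : BddAbove ((fun a => |c - a ⬝ᵥ y|) '' vertRow Alo Ahi i) :=
    ((vertRow_finite Alo Ahi i).image _).bddAbove
  have h1 : |c - v ⬝ᵥ x| ≤ sSup ((fun a => |c - a ⬝ᵥ x|) '' vertRow Alo Ahi i) :=
    le_csSup hbx ⟨v, hvmem, rfl⟩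
  have h2 : |c - v ⬝ᵥ y| ≤ sSup ((fun a => |c - a ⬝ᵥ y|) '' vertRow Alo Ahi i) :=
    le_csSup hby ⟨v, hvmem, rfl⟩
  have hterm := (term_convex c v).2 (Set.mem_univ x) (Set.mem_univ y) hα hβ hαβ
  simp only [smul_eq_mul] at hterm ⊢
  rw [← hveq]
  calc |c - v ⬝ᵥ z| ≤ α * |c - v ⬝ᵥ x| + β * |c - v ⬝ᵥ y| := hterm
    _ ≤ α * sSup ((fun a => |c - a ⬝ᵥ x|) '' vertRow Alo Ahi i)
        + β * sSup ((fun a => |c - a ⬝ᵥ y|) '' vertRow Alo Ahi i) := by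
        gcongr

/-- The recognizing functional is concave on all of ℝⁿ. -/
theorem stmt_13 {m n : ℕ} (Alo Ahi : Matrix (Fin m) (Fin n) ℝ)
    (blo bhi : Fin m → ℝ) :
    ConcaveOn ℝ Set.univ (Tol Alo Ahi blo bhi) := by
  have hterm : ∀ i : Fin m, ConcaveOn ℝ Set.univ
      (fun x : Fin n → ℝ => (bhi i - blo i) / 2 -
        sSup ((fun a => |(bhi i + blo i) / 2 - a ⬝ᵥ x|) '' vertRow Alo Ahi i)) := by
    intro i
    have := (sup_convex Alo Ahi i ((bhi i + blo i) / 2)).neg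
    exact (concaveOn_const _ convex_univ).add this
  rcases Nat.eq_zero_or_pos m with hm | hm
  · subst hm
    have : Tol Alo Ahi blo bhi = fun _ => (0 : ℝ) := by
      funext x
      simp [Tol, iInf_of_empty, Real.sInf_empty]
    rw [this]
    exact concaveOn_const _ convex_univ
  · haveI : Nonempty (Fin m) := ⟨⟨0, hm⟩⟩
    refine ⟨convex_univ, ?_⟩
    intro x _ y _ α β hα hβ hαβ
    refine le_ciInf fun i => ?_
    have hb : ∀ z : Fin n → ℝ, BddBelow (Set.range fun i : Fin m =>
        (bhi i - blo i) / 2 -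
          sSup ((fun a => |(bhi i + blo i) / 2 - a ⬝ᵥ z|) '' vertRow Alo Ahi i)) :=
      fun z => (Set.finite_range _).bddBelow
    have h1 : Tol Alo Ahi blo bhi x ≤ (bhi i - blo i) / 2 -
        sSup ((fun a => |(bhi i + blo i) / 2 - a ⬝ᵥ x|) '' vertRow Alo Ahi i) :=
      ciInf_le (hb x) i
    have h2 : Tol Alo Ahi blo bhi y ≤ (bhi i - blo i) / 2 -
        sSup ((fun a => |(bhi i + blo i) / 2 - a ⬝ᵥ y|) '' vertRow Alo Ahi i) :=
      ciInf_le (hb y) i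
    have h3 := (hterm i).2 (Set.mem_univ x) (Set.mem_univ y) hα hβ hαβ
    simp only [smul_eq_mul] at h3 ⊢
    nlinarith [mul_le_mul_of_nonneg_left h1 hα, mul_le_mul_of_nonneg_left h2 hβ]
end

section
/- The recognizing functional Tol(·, 𝐀, 𝐛) is Lipschitz continuous on ℝⁿ, with Lipschitz constant max_i Σ_j max(|A̲_ij|, |Ā_ij|) with respect to the ∞-norm on ℝⁿ. -/
open Matrix

lemma dot_bound {m n : ℕ} (Alo Ahi : Matrix (Fin m) (Fin n) ℝ) (i : Fin m)
    (x y : Fin n → ℝ) {a : Fin n → ℝ} (ha : a ∈ vertRow Alo Ahi i) :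
    |a ⬝ᵥ x - a ⬝ᵥ y| ≤ (∑ j, max |Alo i j| |Ahi i j|) * (⨆ j : Fin n, |x j - y j|) := by
  have hD : ∀ j, |x j - y j| ≤ ⨆ j : Fin n, |x j - y j| := fun j =>
    le_ciSup (f := fun j => |x j - y j|) (Set.Finite.bddAbove (Set.finite_range _)) j
  have : a ⬝ᵥ x - a ⬝ᵥ y = ∑ j, a j * (x j - y j) := by
    simp [dotProduct, mul_sub, Finset.sum_sub_distrib]
  rw [this, Finset.sum_mul]
  refine (Finset.abs_sum_le_sum_abs _ _).trans (Finset.sum_le_sum fun j _ => ?_)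
  rw [abs_mul]
  have haj : |a j| ≤ max |Alo i j| |Ahi i j| := by
    rcases ha j with h | h <;> simp [h]
  exact mul_le_mul haj (hD j) (abs_nonneg _) ((abs_nonneg _).trans (haj.trans_eq rfl) |>.trans le_rfl)

lemma row_bound {m n : ℕ} (Alo Ahi : Matrix (Fin m) (Fin n) ℝ)
    (blo bhi : Fin m → ℝ) (x y : Fin n → ℝ) (i : Fin m) :
    sSup ((fun a => |(bhi i + blo i) / 2 - a ⬝ᵥ x|) '' vertRow Alo Ahi i) ≤
      sSup ((fun a => |(bhi i + blo i) / 2 - a ⬝ᵥ y|) '' vertRow Alo Ahi i) +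
        (∑ j, max |Alo i j| |Ahi i j|) * (⨆ j : Fin n, |x j - y j|) := by
  apply csSup_le ((vertRow_nonempty Alo Ahi i).image _)
  rintro _ ⟨a, ha, rfl⟩
  have h1 : |(bhi i + blo i) / 2 - a ⬝ᵥ x| ≤ |(bhi i + blo i) / 2 - a ⬝ᵥ y| + |a ⬝ᵥ x - a ⬝ᵥ y| := by
    have := abs_sub_abs_le_abs_sub ((bhi i + blo i) / 2 - a ⬝ᵥ x) ((bhi i + blo i) / 2 - a ⬝ᵥ y)
    have h2 : ((bhi i + blo i) / 2 - a ⬝ᵥ x) - ((bhi i + blo i) / 2 - a ⬝ᵥ y) = -(a ⬝ᵥ x - a ⬝ᵥ y) := by ring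
    rw [h2, abs_neg] at this
    linarith
  have h3 : |(bhi i + blo i) / 2 - a ⬝ᵥ y| ≤
      sSup ((fun a => |(bhi i + blo i) / 2 - a ⬝ᵥ y|) '' vertRow Alo Ahi i) :=
    le_csSup (((vertRow_finite Alo Ahi i).image _).bddAbove) ⟨a, ha, rfl⟩
  have h4 := dot_bound Alo Ahi i x y ha
  linarith

lemma Tol_bound {m n : ℕ} (Alo Ahi : Matrix (Fin m) (Fin n) ℝ)
    (blo bhi : Fin m → ℝ) (x y : Fin n → ℝ) (hm : 0 < m) :
    Tol Alo Ahi blo bhi x - Tol Alo Ahi blo bhi y ≤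
      (⨆ i : Fin m, ∑ j, max |Alo i j| |Ahi i j|) * (⨆ j : Fin n, |x j - y j|) := by
  haveI : Nonempty (Fin m) := Fin.pos_iff_nonempty.mp hm
  set D := ⨆ j : Fin n, |x j - y j| with hDdef
  have hD0 : 0 ≤ D := by
    rcases Nat.eq_zero_or_pos n with hn | hn
    · subst hn; simp [hDdef, Real.iSup_of_isEmpty]
    · haveI : Nonempty (Fin n) := Fin.pos_iff_nonempty.mp hn
      exact le_ciSup_of_le (Set.Finite.bddAbove (Set.finite_range _))
        (Classical.arbitrary _) (abs_nonneg _)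
  rw [sub_le_comm]
  unfold Tol
  apply le_ciInf
  intro i
  have h1 : Tol Alo Ahi blo bhi x ≤ (bhi i - blo i) / 2 -
      sSup ((fun a => |(bhi i + blo i) / 2 - a ⬝ᵥ x|) '' vertRow Alo Ahi i) :=
    ciInf_le (Set.Finite.bddBelow (Set.finite_range _)) i
  have h2 := row_bound Alo Ahi blo bhi y x i
  have hL : (∑ j, max |Alo i j| |Ahi i j|) ≤ ⨆ i : Fin m, ∑ j, max |Alo i j| |Ahi i j| :=
    le_ciSup (f := fun i => ∑ j, max |Alo i j| |Ahi i j|) (Set.Finite.bddAbove (Set.finite_range _)) i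
  have hyx : (⨆ j : Fin n, |y j - x j|) = D := by
    simp [hDdef, abs_sub_comm]
  rw [hyx] at h2
  have hTx : Tol Alo Ahi blo bhi x = ⨅ i : Fin m,
      ((bhi i - blo i) / 2 -
        sSup ((fun a => |(bhi i + blo i) / 2 - a ⬝ᵥ x|) '' vertRow Alo Ahi i)) := rfl
  rw [← hTx]
  nlinarith [mul_le_mul_of_nonneg_right hL hD0]

/-- The recognizing functional is Lipschitz on ℝⁿ (sup norm) with constant
`max_i Σ_j max(|A̲_ij|, |Ā_ij|)`. -/
theorem stmt_14 {m n : ℕ} (Alo Ahi : Matrix (Fin m) (Fin n) ℝ)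
    (blo bhi : Fin m → ℝ) (x y : Fin n → ℝ) :
    |Tol Alo Ahi blo bhi x - Tol Alo Ahi blo bhi y| ≤
      (⨆ i : Fin m, ∑ j, max |Alo i j| |Ahi i j|) * (⨆ j : Fin n, |x j - y j|) := by
  rcases Nat.eq_zero_or_pos m with hm | hm
  · subst hm
    have : Tol Alo Ahi blo bhi x = 0 := Real.iInf_of_isEmpty _
    have h2 : Tol Alo Ahi blo bhi y = 0 := Real.iInf_of_isEmpty _
    have h3 : (⨆ i : Fin 0, ∑ j, max |Alo i j| |Ahi i j|) = 0 := Real.iSup_of_isEmpty _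
    simp [this, h2, h3]
  · rw [abs_sub_le_iff]
    refine ⟨Tol_bound Alo Ahi blo bhi x y hm, ?_⟩
    have := Tol_bound Alo Ahi blo bhi y x hm
    have hs : (⨆ j : Fin n, |y j - x j|) = ⨆ j : Fin n, |x j - y j| := by
      simp [abs_sub_comm]
    rwa [hs] at this
end

section
/- If Tol(x, 𝐀, 𝐛) > 0, then x lies in the topological interior of the tolerable solution set Ξ_tol(𝐀, 𝐛). -/
open Matrix

/-- The tolerable solution set of an interval linear system. -/
def Xtol {m n : ℕ} (Alo Ahi : Matrix (Fin m) (Fin n) ℝ) (blo bhi : Fin m → ℝ) :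
    Set (Fin n → ℝ) :=
  {x | ∀ A : Matrix (Fin m) (Fin n) ℝ,
    (∀ i j, Alo i j ≤ A i j ∧ A i j ≤ Ahi i j) →
    ∀ i, blo i ≤ A.mulVec x i ∧ A.mulVec x i ≤ bhi i}

lemma abs_mid_le_sSup {m n : ℕ} (Alo Ahi : Matrix (Fin m) (Fin n) ℝ) (i : Fin m)
    (x : Fin n → ℝ) (c : ℝ) (r : Fin n → ℝ)
    (hr : ∀ j, Alo i j ≤ r j ∧ r j ≤ Ahi i j) :
    |c - r ⬝ᵥ x| ≤ sSup ((fun a => |c - a ⬝ᵥ x|) '' vertRow Alo Ahi i) := by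
  classical
  set alo : Fin n → ℝ := fun j => if 0 ≤ x j then Alo i j else Ahi i j with halo
  set ahi : Fin n → ℝ := fun j => if 0 ≤ x j then Ahi i j else Alo i j with hahi
  have hlo : alo ∈ vertRow Alo Ahi i := by
    intro j; by_cases h : 0 ≤ x j <;> simp [halo, h]
  have hhi : ahi ∈ vertRow Alo Ahi i := by
    intro j; by_cases h : 0 ≤ x j <;> simp [hahi, h]
  have h1 : alo ⬝ᵥ x ≤ r ⬝ᵥ x := by
    apply Finset.sum_le_sum
    intro j _
    by_cases h : 0 ≤ x j
    · simp only [halo, if_pos h]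
      exact mul_le_mul_of_nonneg_right (hr j).1 h
    · simp only [halo, if_neg h]
      exact mul_le_mul_of_nonpos_right (hr j).2 (le_of_not_ge h)
  have h2 : r ⬝ᵥ x ≤ ahi ⬝ᵥ x := by
    apply Finset.sum_le_sum
    intro j _
    by_cases h : 0 ≤ x j
    · simp only [hahi, if_pos h]
      exact mul_le_mul_of_nonneg_right (hr j).2 h
    · simp only [hahi, if_neg h]
      exact mul_le_mul_of_nonpos_right (hr j).1 (le_of_not_ge h)
  have hbdd : BddAbove ((fun a => |c - a ⬝ᵥ x|) '' vertRow Alo Ahi i) :=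
    ((vertRow_finite Alo Ahi i).image _).bddAbove
  have hl : |c - alo ⬝ᵥ x| ≤ sSup ((fun a => |c - a ⬝ᵥ x|) '' vertRow Alo Ahi i) :=
    le_csSup hbdd ⟨alo, hlo, rfl⟩
  have hh : |c - ahi ⬝ᵥ x| ≤ sSup ((fun a => |c - a ⬝ᵥ x|) '' vertRow Alo Ahi i) :=
    le_csSup hbdd ⟨ahi, hhi, rfl⟩
  have hl' := neg_abs_le (c - alo ⬝ᵥ x)
  have hh' := le_abs_self (c - ahi ⬝ᵥ x)
  have hl'' := le_abs_self (c - alo ⬝ᵥ x)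
  have hh'' := neg_abs_le (c - ahi ⬝ᵥ x)
  apply abs_le.mpr
  constructor <;> linarith

/-- If `Tol(x) > 0`, then `x` lies in the topological interior of the
tolerable solution set. -/
theorem stmt_15 {m n : ℕ} (Alo Ahi : Matrix (Fin m) (Fin n) ℝ)
    (blo bhi : Fin m → ℝ) (hA : ∀ i j, Alo i j ≤ Ahi i j) (hb : ∀ i, blo i ≤ bhi i)
    (x : Fin n → ℝ) (hx : 0 < Tol Alo Ahi blo bhi x) :
    x ∈ interior (Xtol Alo Ahi blo bhi) := by
  rw [mem_interior_iff_mem_nhds, Metric.mem_nhds_iff]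
  set ε := Tol Alo Ahi blo bhi x with hε
  have hsum_nonneg : (0:ℝ) ≤ ∑ i, ∑ j, (|Alo i j| + |Ahi i j|) :=
    Finset.sum_nonneg fun i _ => Finset.sum_nonneg fun j _ => by positivity
  set C : ℝ := 1 + ∑ i, ∑ j, (|Alo i j| + |Ahi i j|) with hC
  have hCpos : (0:ℝ) < C := by linarith
  refine ⟨ε / C, div_pos hx hCpos, ?_⟩
  intro y hy
  intro A hAmem i
  -- bound on sSup from Tol
  have hSle : sSup ((fun a => |(bhi i + blo i) / 2 - a ⬝ᵥ x|) '' vertRow Alo Ahi i)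
      ≤ (bhi i - blo i) / 2 - ε := by
    have h := ciInf_le (f := fun i : Fin m =>
      ((bhi i - blo i) / 2 -
        sSup ((fun a => |(bhi i + blo i) / 2 - a ⬝ᵥ x|) '' vertRow Alo Ahi i)))
      (Set.Finite.bddBelow (Set.finite_range _)) i
    rw [← Tol, ← hε] at h
    linarith
  have habs : |(bhi i + blo i) / 2 - (A i) ⬝ᵥ x| ≤ (bhi i - blo i) / 2 - ε :=
    (abs_mid_le_sSup Alo Ahi i x _ (A i) (fun j => hAmem i j)).trans hSle
  -- bound on the perturbation
  have hdist : dist x y < ε / C := by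
    rw [dist_comm]; exact hy
  have hrowbd : ∀ j, |A i j| ≤ |Alo i j| + |Ahi i j| := by
    intro j
    have h1 := (hAmem i j).1
    have h2 := (hAmem i j).2
    have := neg_abs_le (Alo i j)
    have := le_abs_self (Ahi i j)
    have := abs_nonneg (Alo i j)
    have := abs_nonneg (Ahi i j)
    apply abs_le.mpr; constructor <;> linarith
  have hdiff : |(A i) ⬝ᵥ x - (A i) ⬝ᵥ y| < ε := by
    have heq : (A i) ⬝ᵥ x - (A i) ⬝ᵥ y = ∑ j, A i j * (x j - y j) := by
      simp [dotProduct, Finset.sum_sub_distrib, mul_sub]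
    rw [heq]
    calc |∑ j, A i j * (x j - y j)| ≤ ∑ j, |A i j * (x j - y j)| :=
          Finset.abs_sum_le_sum_abs _ _
      _ ≤ ∑ j, (|Alo i j| + |Ahi i j|) * dist x y := by
          apply Finset.sum_le_sum
          intro j _
          rw [abs_mul]
          have h1 : |x j - y j| ≤ dist x y := by
            rw [← Real.dist_eq]; exact dist_le_pi_dist x y j
          exact mul_le_mul (hrowbd j) h1 (abs_nonneg _)
            (by positivity)
      _ = (∑ j, (|Alo i j| + |Ahi i j|)) * dist x y := by
          rw [Finset.sum_mul]
      _ ≤ (C - 1) * (ε / C) := by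
          apply mul_le_mul
          · rw [hC]; simp only [add_sub_cancel_left]
            exact Finset.single_le_sum
              (f := fun i => ∑ j, (|Alo i j| + |Ahi i j|))
              (fun i _ => Finset.sum_nonneg fun j _ => by positivity)
              (Finset.mem_univ i)
          · exact hdist.le
          · exact dist_nonneg
          · linarith
      _ < C * (ε / C) := by
          apply mul_lt_mul_of_pos_right (by linarith) (div_pos hx hCpos)
      _ = ε := by field_simp
  have hmain : |(bhi i + blo i) / 2 - (A i) ⬝ᵥ y| < (bhi i - blo i) / 2 := by
    have h := abs_sub_abs_le_abs_sub ((bhi i + blo i) / 2 - (A i) ⬝ᵥ y)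
      ((bhi i + blo i) / 2 - (A i) ⬝ᵥ x)
    have h2 : ((bhi i + blo i) / 2 - (A i) ⬝ᵥ y) - ((bhi i + blo i) / 2 - (A i) ⬝ᵥ x)
        = (A i) ⬝ᵥ x - (A i) ⬝ᵥ y := by ring
    rw [h2] at h
    linarith
  have hmv : A.mulVec y i = (A i) ⬝ᵥ y := rfl
  have := abs_lt.mp hmain
  rw [hmv]
  constructor <;> linarith [this.1, this.2]
end
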